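/- Let Ω ⊆ ℝ³ be a bounded measurable set with diameter at most d, and let B : ℝ³ → ℝ³ be an integrable vector field vanishing outside Ω whose fourth power of the norm is integrable on Ω. Let A be the Biot–Savart vector potential of B. Then ∫_Ω ‖A(x)‖⁴ dx ≤ d⁴ · ∫_Ω ‖B(x)‖⁴ dx. -/

import Mathlib

open MeasureTheory

noncomputable section

/-- The cross product of two vectors in Euclidean 3-space. -/
def cross3 (u v : EuclideanSpace ℝ (Fin 3)) : EuclideanSpace ℝ (Fin 3) :=
  (WithLp.equiv 2 (Fin 3 → ℝ)).symm
    ![u 1 * v 2 - u 2 * v 1, u 2 * v 0 - u 0 * v 2, u 0 * v 1 - u 1 * v 0]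

/-- The Biot–Savart vector potential of a field `B` supported in `Ω`:
`A(x) = (1/(4π)) ∫_Ω B(y) × (x − y)/‖x − y‖³ dy`. -/
def biotSavart (Ω : Set (EuclideanSpace ℝ (Fin 3)))
    (B : EuclideanSpace ℝ (Fin 3) → EuclideanSpace ℝ (Fin 3))
    (x : EuclideanSpace ℝ (Fin 3)) : EuclideanSpace ℝ (Fin 3) :=
  (1 / (4 * Real.pi)) • ∫ y in Ω, (‖x - y‖ ^ 3)⁻¹ • cross3 (B y) (x - y)

/-! The integrand of `biotSavart` has norm at most `‖B y‖ ‖x - y‖⁻²`. Since `Ω` lies in the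
closed ball of radius `d` about each of its points, polar coordinates give
`∫_Ω ‖x - y‖⁻² dy ≤ 4πd`, in either variable. Hölder's inequality against the weight
`‖x - y‖⁻²` followed by Tonelli (Schur's test) then yields
`∫_Ω ‖A‖⁴ ≤ ((4π)⁻¹ · 4πd)⁴ ∫_Ω ‖B‖⁴`. -/

open Set Metric Module
open scoped ENNReal Matrix

theorem cross3_eq_crossProduct (u v : EuclideanSpace ℝ (Fin 3)) :
    cross3 u v = WithLp.toLp 2 (WithLp.ofLp u ⨯₃ WithLp.ofLp v) := by
  rw [cross_apply]; rfl

theorem norm_cross3_le (u v : EuclideanSpace ℝ (Fin 3)) : ‖cross3 u v‖ ≤ ‖u‖ * ‖v‖ := by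
  rw [cross3_eq_crossProduct, InnerProductGeometry.norm_ofLp_crossProduct]
  exact mul_le_of_le_one_right (by positivity) (Real.sin_le_one _)

theorem enorm_inv_norm_cube_smul_cross3_le (b z : EuclideanSpace ℝ (Fin 3)) :
    ‖(‖z‖ ^ 3)⁻¹ • cross3 b z‖ₑ ≤ ‖b‖ₑ * ENNReal.ofReal (‖z‖ ^ 2)⁻¹ := by
  rw [← ofReal_norm, ← ofReal_norm, ← ENNReal.ofReal_mul (norm_nonneg _)]
  refine ENNReal.ofReal_le_ofReal ?_
  rcases eq_or_ne z 0 with rfl | hz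
  · simp
  calc ‖(‖z‖ ^ 3)⁻¹ • cross3 b z‖ ≤ (‖z‖ ^ 3)⁻¹ * (‖b‖ * ‖z‖) := by
        rw [norm_smul, norm_inv, norm_pow, norm_norm]
        gcongr
        exact norm_cross3_le b z
    _ = ‖b‖ * (‖z‖ ^ 2)⁻¹ := by
        field_simp [norm_ne_zero_iff.mpr hz]

theorem rpow_lintegral_mul_le {β : Type*} [MeasurableSpace β] {ν : Measure β}
    {b k : β → ℝ≥0∞} {p : ℝ} (hp : 1 ≤ p) (hb : AEMeasurable b ν) (hk : AEMeasurable k ν) :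
    (∫⁻ y, b y * k y ∂ν) ^ p ≤ (∫⁻ y, b y ^ p * k y ∂ν) * (∫⁻ y, k y ∂ν) ^ (p - 1) := by
  have hp0 : 0 < p := by linarith
  have hsplit : ∀ y, b y * k y = (b y ^ p * k y) ^ p⁻¹ * k y ^ (1 - p⁻¹) := by
    intro y
    rw [ENNReal.mul_rpow_of_nonneg _ _ (by positivity), ← ENNReal.rpow_mul,
      mul_inv_cancel₀ hp0.ne', ENNReal.rpow_one, mul_assoc,
      ← ENNReal.rpow_add_of_nonneg _ _ (by positivity) (by simp [inv_le_one_of_one_le₀ hp])]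
    simp
  have holder := ENNReal.lintegral_mul_norm_pow_le ((hb.pow_const p).mul hk) hk
    (inv_nonneg.mpr hp0.le) (sub_nonneg.mpr (inv_le_one_of_one_le₀ hp)) (add_sub_cancel _ _)
  calc (∫⁻ y, b y * k y ∂ν) ^ p
      ≤ ((∫⁻ y, b y ^ p * k y ∂ν) ^ p⁻¹ * (∫⁻ y, k y ∂ν) ^ (1 - p⁻¹)) ^ p := by
        simp_rw [hsplit]
        gcongr
        exact holder
    _ = (∫⁻ y, b y ^ p * k y ∂ν) * (∫⁻ y, k y ∂ν) ^ (p - 1) := by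
        rw [ENNReal.mul_rpow_of_nonneg _ _ hp0.le, ← ENNReal.rpow_mul, ← ENNReal.rpow_mul,
          inv_mul_cancel₀ hp0.ne', ENNReal.rpow_one, sub_mul, one_mul, inv_mul_cancel₀ hp0.ne']

theorem lintegral_rpow_lintegral_mul_le {α β : Type*} [MeasurableSpace α] [MeasurableSpace β]
    {μ : Measure α} {ν : Measure β} [SFinite μ] [SFinite ν] {K : α → β → ℝ≥0∞}
    {b : β → ℝ≥0∞} {p : ℝ} {κ : ℝ≥0∞} (hp : 1 ≤ p) (hK : Measurable (Function.uncurry K))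
    (hb : AEMeasurable b ν) (hKx : ∀ᵐ x ∂μ, ∫⁻ y, K x y ∂ν ≤ κ)
    (hKy : ∀ᵐ y ∂ν, ∫⁻ x, K x y ∂μ ≤ κ) :
    ∫⁻ x, (∫⁻ y, b y * K x y ∂ν) ^ p ∂μ ≤ κ ^ p * ∫⁻ y, b y ^ p ∂ν := by
  have hbK : AEMeasurable (Function.uncurry fun x y => b y ^ p * K x y) (μ.prod ν) :=
    (hb.pow_const p).comp_snd.mul hK.aemeasurable
  calc ∫⁻ x, (∫⁻ y, b y * K x y ∂ν) ^ p ∂μ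
      ≤ ∫⁻ x, κ ^ (p - 1) * ∫⁻ y, b y ^ p * K x y ∂ν ∂μ := by
        refine lintegral_mono_ae (hKx.mono fun x hx => ?_)
        grw [rpow_lintegral_mul_le hp hb hK.of_uncurry_left.aemeasurable, hx, mul_comm]
        linarith
    _ = κ ^ (p - 1) * ∫⁻ y, b y ^ p * ∫⁻ x, K x y ∂μ ∂ν := by
        rw [lintegral_const_mul'' _ hbK.lintegral_prod_right, lintegral_lintegral_swap hbK]
        simp_rw [lintegral_const_mul _ hK.of_uncurry_right]
    _ ≤ κ ^ (p - 1) * ∫⁻ y, b y ^ p * κ ∂ν :=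
        mul_le_mul_right (lintegral_mono_ae (hKy.mono fun y hy => by gcongr)) _
    _ = κ ^ p * ∫⁻ y, b y ^ p ∂ν := by
        rw [lintegral_mul_const'' _ (hb.pow_const p), mul_comm _ κ, ← mul_assoc]
        nth_rw 2 [← ENNReal.rpow_one κ]
        rw [← ENNReal.rpow_add_of_nonneg _ _ (by linarith) zero_le_one, sub_add_cancel]

theorem lintegral_closedBall_inv_norm_sub_pow {E : Type*} [NormedAddCommGroup E]
    [NormedSpace ℝ E] [MeasurableSpace E] [BorelSpace E] [FiniteDimensional ℝ E] [Nontrivial E]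
    (μ : Measure E) [μ.IsAddHaarMeasure] (x : E) {r : ℝ} (hr : 0 ≤ r) :
    ∫⁻ y in closedBall x r, ENNReal.ofReal (‖x - y‖ ^ (finrank ℝ E - 1))⁻¹ ∂μ =
      ENNReal.ofReal (finrank ℝ E * μ.real (ball 0 1) * r) := by
  set f : ℝ → ℝ := (Iic r).indicator fun t => (t ^ (finrank ℝ E - 1))⁻¹
  have hpolar : ∀ t ∈ Ioi (0 : ℝ), t ^ (finrank ℝ E - 1) • f t = (Iic r).indicator 1 t := by
    intro t (ht : 0 < t)
    by_cases htr : t ≤ r <;> simp [f, htr, ht.ne']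
  have hint : Integrable (fun z : E => f ‖z‖) μ := by
    rw [integrable_fun_norm_addHaar μ, integrableOn_congr_fun hpolar measurableSet_Ioi,
      IntegrableOn, integrable_indicator_iff measurableSet_Iic, IntegrableOn,
      Measure.restrict_restrict measurableSet_Iic, Iic_inter_Ioi]
    exact integrableOn_const (by simp)
  calc ∫⁻ y in closedBall x r, ENNReal.ofReal (‖x - y‖ ^ (finrank ℝ E - 1))⁻¹ ∂μ
      = ∫⁻ y, ENNReal.ofReal (f ‖y - x‖) ∂μ := by
        rw [← lintegral_indicator measurableSet_closedBall]
        congr 1 with y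
        by_cases hy : ‖y - x‖ ≤ r <;> simp [f, hy, dist_eq_norm, norm_sub_rev x y]
    _ = ENNReal.ofReal (∫ z, f ‖z‖ ∂μ) := by
        rw [lintegral_sub_right_eq_self (fun z => ENNReal.ofReal (f ‖z‖)) x,
          ofReal_integral_eq_lintegral_ofReal hint]
        exact ae_of_all _ fun z =>
          indicator_nonneg (fun _ _ => inv_nonneg.mpr (pow_nonneg (norm_nonneg z) _)) _
    _ = ENNReal.ofReal (finrank ℝ E * μ.real (ball 0 1) * r) := by
        rw [integral_fun_norm_addHaar μ f, setIntegral_congr_fun measurableSet_Ioi hpolar,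
          setIntegral_indicator measurableSet_Iic, Ioi_inter_Iic]
        simp [hr, mul_assoc]

theorem lintegral_closedBall_inv_norm_sub_sq (x : EuclideanSpace ℝ (Fin 3)) {r : ℝ} (hr : 0 ≤ r) :
    ∫⁻ y in closedBall x r, ENNReal.ofReal (‖x - y‖ ^ 2)⁻¹ = ENNReal.ofReal (4 * Real.pi * r) := by
  have := lintegral_closedBall_inv_norm_sub_pow volume x hr
  simp only [finrank_euclideanSpace_fin, Measure.real, EuclideanSpace.volume_ball_fin_three] at this
  convert this using 2
  rw [ENNReal.ofReal_one, one_pow, one_mul, ENNReal.toReal_ofReal (by positivity)]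
  push_cast
  ring

section BiotSavart

open Real

theorem enorm_biotSavart_le (Ω : Set (EuclideanSpace ℝ (Fin 3)))
    (B : EuclideanSpace ℝ (Fin 3) → EuclideanSpace ℝ (Fin 3)) (x : EuclideanSpace ℝ (Fin 3)) :
    ‖biotSavart Ω B x‖ₑ ≤
      ENNReal.ofReal (1 / (4 * π)) * ∫⁻ y in Ω, ‖B y‖ₑ * ENNReal.ofReal (‖x - y‖ ^ 2)⁻¹ := by
  rw [biotSavart, enorm_smul, ← ofReal_norm, Real.norm_of_nonneg (by positivity)]
  gcongr
  exact (enorm_integral_le_lintegral_enorm _).trans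
    (lintegral_mono fun y => enorm_inv_norm_cube_smul_cross3_le (B y) (x - y))

theorem lintegral_inv_norm_sub_sq_le {Ω : Set (EuclideanSpace ℝ (Fin 3))}
    (hΩb : Bornology.IsBounded Ω) {d : ℝ} (hd : diam Ω ≤ d) {x : EuclideanSpace ℝ (Fin 3)}
    (hx : x ∈ Ω) :
    ∫⁻ y in Ω, ENNReal.ofReal (‖x - y‖ ^ 2)⁻¹ ≤ ENNReal.ofReal (4 * π * d) := by
  have hΩd : Ω ⊆ closedBall x d := fun y hy =>
    mem_closedBall'.mpr ((dist_le_diam_of_mem hΩb hx hy).trans hd)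
  exact (lintegral_mono_set hΩd).trans_eq
    (lintegral_closedBall_inv_norm_sub_sq x (diam_nonneg.trans hd))

theorem lintegral_enorm_biotSavart_pow_le {Ω : Set (EuclideanSpace ℝ (Fin 3))}
    (hΩ : MeasurableSet Ω) (hΩb : Bornology.IsBounded Ω) {d : ℝ} (hd : diam Ω ≤ d)
    {B : EuclideanSpace ℝ (Fin 3) → EuclideanSpace ℝ (Fin 3)}
    (hB : AEMeasurable B (volume.restrict Ω)) :
    ∫⁻ x in Ω, ‖biotSavart Ω B x‖ₑ ^ 4 ≤ ENNReal.ofReal d ^ 4 * ∫⁻ x in Ω, ‖B x‖ₑ ^ 4 := by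
  set c := ENNReal.ofReal (1 / (4 * π))
  set κ := ENNReal.ofReal (4 * π * d)
  have hSchur := lintegral_rpow_lintegral_mul_le (p := 4) (κ := κ)
    (K := fun x y : EuclideanSpace ℝ (Fin 3) => ENNReal.ofReal (‖x - y‖ ^ 2)⁻¹)
    (by norm_num) (by fun_prop) hB.enorm
    ((ae_restrict_mem hΩ).mono fun x hx => lintegral_inv_norm_sub_sq_le hΩb hd hx)
    ((ae_restrict_mem hΩ).mono fun y hy => by
      simpa only [norm_sub_rev] using lintegral_inv_norm_sub_sq_le hΩb hd hy)
  simp only [ENNReal.rpow_ofNat] at hSchur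
  have hcκ : c * κ = ENNReal.ofReal d := by
    rw [← ENNReal.ofReal_mul (by positivity)]
    field_simp
  calc ∫⁻ x in Ω, ‖biotSavart Ω B x‖ₑ ^ 4
      ≤ ∫⁻ x in Ω, c ^ 4 * (∫⁻ y in Ω, ‖B y‖ₑ * ENNReal.ofReal (‖x - y‖ ^ 2)⁻¹) ^ 4 :=
        lintegral_mono fun x => by
          rw [← mul_pow]
          exact pow_le_pow_left' (enorm_biotSavart_le Ω B x) 4
    _ ≤ c ^ 4 * (κ ^ 4 * ∫⁻ x in Ω, ‖B x‖ₑ ^ 4) := by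
        rw [lintegral_const_mul' _ _ (by finiteness)]
        gcongr
    _ = ENNReal.ofReal d ^ 4 * ∫⁻ x in Ω, ‖B x‖ₑ ^ 4 := by
        rw [← mul_assoc, ← mul_pow, hcκ]

end BiotSavart

theorem biotSavart_L4_bound_general (Ω : Set (EuclideanSpace ℝ (Fin 3)))
    (hΩ : MeasurableSet Ω) (hΩb : Bornology.IsBounded Ω)
    (d : ℝ) (hd : Metric.diam Ω ≤ d)
    (B : EuclideanSpace ℝ (Fin 3) → EuclideanSpace ℝ (Fin 3))
    (hB : Integrable B)
    (hB4 : IntegrableOn (fun x => ‖B x‖ ^ 4) Ω) :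
    ∫ x in Ω, ‖biotSavart Ω B x‖ ^ 4 ≤ d ^ 4 * ∫ x in Ω, ‖B x‖ ^ 4 := by
  have hd0 : 0 ≤ d := diam_nonneg.trans hd
  have hL4 : ∫⁻ x in Ω, ‖biotSavart Ω B x‖ₑ ^ 4 ≤ ENNReal.ofReal (d ^ 4 * ∫ x in Ω, ‖B x‖ ^ 4) := by
    rw [ENNReal.ofReal_mul (by positivity), ENNReal.ofReal_pow hd0,
      ofReal_integral_eq_lintegral_ofReal hB4 (ae_of_all _ fun x => by positivity)]
    simpa only [ENNReal.ofReal_pow (norm_nonneg _), ofReal_norm] using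
      lintegral_enorm_biotSavart_pow_le hΩ hΩb hd hB.aemeasurable.restrict
  calc ∫ x in Ω, ‖biotSavart Ω B x‖ ^ 4 ≤ ‖∫ x in Ω, ‖biotSavart Ω B x‖ ^ 4‖ := Real.le_norm_self _
    _ = ‖∫ x in Ω, ‖biotSavart Ω B x‖ ^ 4‖ₑ.toReal := (toReal_enorm _).symm
    _ ≤ d ^ 4 * ∫ x in Ω, ‖B x‖ ^ 4 := by
        refine ENNReal.toReal_le_of_le_ofReal (by positivity) ?_
        refine (enorm_integral_le_lintegral_enorm _).trans ?_
        simpa only [enorm_pow, enorm_norm] using hL4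

theorem biotSavart_L4_bound (Ω : Set (EuclideanSpace ℝ (Fin 3)))
    (hΩ : MeasurableSet Ω) (hΩb : Bornology.IsBounded Ω)
    (d : ℝ) (hd : Metric.diam Ω ≤ d)
    (B : EuclideanSpace ℝ (Fin 3) → EuclideanSpace ℝ (Fin 3))
    (hB : Integrable B) (hB0 : ∀ x ∉ Ω, B x = 0)
    (hB4 : IntegrableOn (fun x => ‖B x‖ ^ 4) Ω) :
    ∫ x in Ω, ‖biotSavart Ω B x‖ ^ 4 ≤ d ^ 4 * ∫ x in Ω, ‖B x‖ ^ 4 :=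
  biotSavart_L4_bound_general Ω hΩ hΩb d hd B hB hB4

end
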